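/- Let n₁, n₂ ∈ ℝ³ be orthogonal unit vectors and ρ a qubit density matrix. Then every pure-state decomposition ρ = ∑ₖ pₖ |ψₖ⟩⟨ψₖ| satisfies ∑ₖ pₖ (ΔL_{n₁})²_{ψₖ} + (ΔL_{n₂})²_ρ ≥ 1/4, and moreover there exists a pure-state decomposition with ∑ₖ pₖ (ΔL_{n₁})²_{ψₖ} + (ΔL_{n₂})²_ρ ≤ Tr(ρ²)/2. (Since the quantum Fisher information is the convex roof of four times the variance, this expresses the bounds 1/4 ≤ (1/4)F_Q[ρ, L_{n₁}] + (ΔL_{n₂})²_ρ ≤ (1 + ‖r‖²)/4 in terms of the purity.) -/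

import Mathlib

open Matrix BigOperators
open scoped ComplexOrder

/-- The Pauli matrix σx. -/
def sigmaX : Matrix (Fin 2) (Fin 2) ℂ := !![0, 1; 1, 0]

/-- The Pauli matrix σy. -/
def sigmaY : Matrix (Fin 2) (Fin 2) ℂ := !![0, -Complex.I; Complex.I, 0]

/-- The Pauli matrix σz. -/
def sigmaZ : Matrix (Fin 2) (Fin 2) ℂ := !![1, 0; 0, -1]

/-- The spin-1/2 operator L_n = (n₁σx + n₂σy + n₃σz)/2 along the direction n ∈ ℝ³. -/
noncomputable def Lspin (n : Fin 3 → ℝ) : Matrix (Fin 2) (Fin 2) ℂ :=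
  (1 / 2 : ℂ) • ((n 0 : ℂ) • sigmaX + (n 1 : ℂ) • sigmaY + (n 2 : ℂ) • sigmaZ)

/-- A qubit density matrix: 2×2 positive semidefinite with unit trace. -/
def IsDensity (ρ : Matrix (Fin 2) (Fin 2) ℂ) : Prop :=
  ρ.PosSemidef ∧ ρ.trace = 1

/-- The rank-one projection |ψ⟩⟨ψ|. -/
def ketbra (ψ : Fin 2 → ℂ) : Matrix (Fin 2) (Fin 2) ℂ :=
  Matrix.vecMulVec ψ (star ψ)

/-- Pure-state variance (ΔA)²_ψ = ⟨ψ, A²ψ⟩ − ⟨ψ, Aψ⟩². -/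
noncomputable def pureVar (A : Matrix (Fin 2) (Fin 2) ℂ) (ψ : Fin 2 → ℂ) : ℝ :=
  (star ψ ⬝ᵥ (A * A).mulVec ψ).re - ((star ψ ⬝ᵥ A.mulVec ψ).re) ^ 2

/-- Mixed-state variance (ΔA)²_ρ = Tr(A²ρ) − (Tr(Aρ))². -/
noncomputable def mixVar (A ρ : Matrix (Fin 2) (Fin 2) ℂ) : ℝ :=
  ((A * A * ρ).trace).re - (((A * ρ).trace).re) ^ 2

/-- The purity Tr(ρ²). -/
noncomputable def purity (ρ : Matrix (Fin 2) (Fin 2) ℂ) : ℝ :=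
  ((ρ * ρ).trace).re

/-!
Write a qubit state in Bloch form `ρ = 1/2 + L_r`. Then `Tr (L_n ρ) = n·r/2`, `L_n² = |n|²/4` and
`Tr ρ² = (1 + |r|²)/2`, and the pure states are exactly those with `|r| = 1`.

If `ρ = ∑ p_k |ψ_k⟩⟨ψ_k|` and `s_k` is the Bloch vector of `ψ_k`, then `r = ∑ p_k s_k`, and the lower
bound becomes `∑ p_k (n₁·s_k)² + (n₂·r)² ≤ 1`. This follows from Jensen's inequality
`(n₂·r)² ≤ ∑ p_k (n₂·s_k)²` and Bessel's inequality `(n₁·s)² + (n₂·s)² ≤ |s|² = 1`.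

For the upper bound, decompose `r` along `n₁`: the line `r + t n₁` meets the unit sphere in two points
`s±` with `n₁·s± = ±√((n₁·r)² + 1 - |r|²)`, and `r` is a convex combination of them. For this
decomposition the left-hand side is `(1 + |r|² - (n₁·r)² - (n₂·r)²)/4 ≤ Tr ρ² / 2`.
-/

section Geometry

variable {ι : Type*} [Fintype ι]

theorem sq_dotProduct_add_sq_dotProduct_le {n₁ n₂ : ι → ℝ} (h₁₁ : n₁ ⬝ᵥ n₁ = 1)
    (h₂₂ : n₂ ⬝ᵥ n₂ = 1) (h₁₂ : n₁ ⬝ᵥ n₂ = 0) (s : ι → ℝ) :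
    (n₁ ⬝ᵥ s) ^ 2 + (n₂ ⬝ᵥ s) ^ 2 ≤ s ⬝ᵥ s := by
  set v := s - (n₁ ⬝ᵥ s) • n₁ - (n₂ ⬝ᵥ s) • n₂
  have hv : 0 ≤ v ⬝ᵥ v := Finset.sum_nonneg fun i _ => mul_self_nonneg (v i)
  have h₂₁ : n₂ ⬝ᵥ n₁ = 0 := by rwa [dotProduct_comm]
  simp only [v, sub_dotProduct, dotProduct_sub, smul_dotProduct, dotProduct_smul,
    smul_eq_mul, h₁₁, h₂₂, h₁₂, h₂₁, dotProduct_comm s] at hv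
  nlinarith

theorem sum_mul_sq_dotProduct_add_sq_dotProduct_sum_le {n₁ n₂ : ι → ℝ}
    (h₁₁ : n₁ ⬝ᵥ n₁ = 1) (h₂₂ : n₂ ⬝ᵥ n₂ = 1) (h₁₂ : n₁ ⬝ᵥ n₂ = 0)
    {m : ℕ} {p : Fin m → ℝ} {s : Fin m → ι → ℝ} (hp : ∀ k, 0 ≤ p k) (hp₁ : ∑ k, p k = 1)
    (hs : ∀ k, s k ⬝ᵥ s k = 1) :
    ∑ k, p k * (n₁ ⬝ᵥ s k) ^ 2 + (n₂ ⬝ᵥ ∑ k, p k • s k) ^ 2 ≤ 1 := by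
  have jensen : (n₂ ⬝ᵥ ∑ k, p k • s k) ^ 2 ≤ ∑ k, p k * (n₂ ⬝ᵥ s k) ^ 2 := by
    simpa [dotProduct_sum, dotProduct_smul] using
      (even_two.convexOn_pow (𝕜 := ℝ)).map_sum_le (t := Finset.univ)
        (p := fun k => n₂ ⬝ᵥ s k) (fun k _ => hp k) hp₁ (fun k _ => Set.mem_univ _)
  have bessel : ∀ k, (n₁ ⬝ᵥ s k) ^ 2 + (n₂ ⬝ᵥ s k) ^ 2 ≤ 1 := fun k =>
    hs k ▸ sq_dotProduct_add_sq_dotProduct_le h₁₁ h₂₂ h₁₂ (s k)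
  calc ∑ k, p k * (n₁ ⬝ᵥ s k) ^ 2 + (n₂ ⬝ᵥ ∑ k, p k • s k) ^ 2
      ≤ ∑ k, p k * ((n₁ ⬝ᵥ s k) ^ 2 + (n₂ ⬝ᵥ s k) ^ 2) := by
        simp only [mul_add, Finset.sum_add_distrib]; linarith
    _ ≤ ∑ k, p k * 1 := by gcongr with k; exacts [hp k, bessel k]
    _ = 1 := by simp [hp₁]

theorem exists_unit_decomposition_along {n r : ι → ℝ} (hn : n ⬝ᵥ n = 1) (hr : r ⬝ᵥ r ≤ 1) :
    ∃ (p : Fin 2 → ℝ) (s : Fin 2 → ι → ℝ), (∀ k, 0 ≤ p k) ∧ ∑ k, p k = 1 ∧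
      (∀ k, s k ⬝ᵥ s k = 1) ∧ ∑ k, p k • s k = r ∧
      ∀ k, (n ⬝ᵥ s k) ^ 2 = (n ⬝ᵥ r) ^ 2 + 1 - r ⬝ᵥ r := by
  set c := n ⬝ᵥ r
  set d := √(c ^ 2 + 1 - r ⬝ᵥ r)
  have hd : d ^ 2 = c ^ 2 + 1 - r ⬝ᵥ r := Real.sq_sqrt (by nlinarith)
  have hcd : |c / d| ≤ 1 := by
    rw [abs_div, abs_of_nonneg (Real.sqrt_nonneg _)]
    exact div_le_one_of_le₀ (Real.abs_le_sqrt (by linarith)) (Real.sqrt_nonneg _)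
  -- If `d = 0` then `c = 0`, so `c / d = 0` is harmless and both weights are `1 / 2`.
  have hcdd : c / d * d = c := div_mul_cancel_of_imp fun h =>
    pow_eq_zero_iff two_ne_zero |>.mp (by rw [h] at hd; nlinarith [sq_nonneg c])
  have hnc : n ⬝ᵥ r = c := rfl
  have hrn : r ⬝ᵥ n = c := dotProduct_comm r n
  -- `s k` are the two points where the line through `r` in direction `n` meets the unit sphere.
  refine ⟨![(1 + c / d) / 2, (1 - c / d) / 2], ![r + (d - c) • n, r + (-d - c) • n],
    ?_, ?_, ?_, ?_, ?_⟩
  · intro k; fin_cases k <;> simp <;> linarith [abs_le.mp hcd]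
  · simp [Fin.sum_univ_two]; ring
  · intro k; fin_cases k <;>
      simp [add_dotProduct, dotProduct_add, smul_dotProduct, dotProduct_smul, hn, hnc, hrn] <;>
      linear_combination hd
  · ext i
    simp [Fin.sum_univ_two]
    linear_combination n i * hcdd
  · intro k; fin_cases k <;>
      simp [dotProduct_add, dotProduct_smul, hn, hnc] <;> linear_combination hd

end Geometry

theorem Lspin_eq (n : Fin 3 → ℝ) :
    Lspin n = !![(n 2 : ℂ) / 2, (n 0 - n 1 * Complex.I) / 2;
      (n 0 + n 1 * Complex.I) / 2, -(n 2 : ℂ) / 2] := by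
  ext i j
  fin_cases i <;> fin_cases j <;> simp [Lspin, sigmaX, sigmaY, sigmaZ] <;> ring

theorem Lspin_add (n m : Fin 3 → ℝ) : Lspin (n + m) = Lspin n + Lspin m := by
  simp only [Lspin, Pi.add_apply, Complex.ofReal_add, add_smul]; module

theorem Lspin_smul (c : ℝ) (n : Fin 3 → ℝ) : Lspin (c • n) = c • Lspin n := by
  simp only [Lspin, Pi.smul_apply, smul_eq_mul, Complex.ofReal_mul, mul_smul,
    ← Complex.coe_smul]
  module

noncomputable def LspinLinearMap : (Fin 3 → ℝ) →ₗ[ℝ] Matrix (Fin 2) (Fin 2) ℂ where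
  toFun := Lspin
  map_add' := Lspin_add
  map_smul' := Lspin_smul

theorem trace_Lspin (n : Fin 3 → ℝ) : (Lspin n).trace = 0 := by
  simp [Lspin_eq, trace_fin_two]; ring

theorem Lspin_mul_self (n : Fin 3 → ℝ) : Lspin n * Lspin n = ((n ⬝ᵥ n / 4 : ℝ) : ℂ) • 1 := by
  rw [Lspin_eq]
  ext i j
  fin_cases i <;> fin_cases j <;>
    simp [mul_apply, Fin.sum_univ_two, dotProduct, Fin.sum_univ_three] <;> ring_nf <;>
    simp only [Complex.I_sq] <;> ring

theorem trace_Lspin_mul_Lspin (n m : Fin 3 → ℝ) :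
    (Lspin n * Lspin m).trace = ((n ⬝ᵥ m / 2 : ℝ) : ℂ) := by
  simp [Lspin_eq, trace_fin_two, dotProduct, Fin.sum_univ_three]
  ring_nf
  simp only [Complex.I_sq]
  ring

noncomputable def blochState (r : Fin 3 → ℝ) : Matrix (Fin 2) (Fin 2) ℂ :=
  (1 / 2 : ℂ) • 1 + Lspin r

theorem trace_blochState (r : Fin 3 → ℝ) : (blochState r).trace = 1 := by
  simp [blochState, trace_Lspin]

theorem trace_Lspin_mul_blochState (n r : Fin 3 → ℝ) :
    (Lspin n * blochState r).trace = ((n ⬝ᵥ r / 2 : ℝ) : ℂ) := by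
  simp [blochState, mul_add, trace_Lspin, trace_Lspin_mul_Lspin]

theorem mixVar_Lspin_blochState (n r : Fin 3 → ℝ) :
    mixVar (Lspin n) (blochState r) = (n ⬝ᵥ n - (n ⬝ᵥ r) ^ 2) / 4 := by
  rw [mixVar, Lspin_mul_self, smul_mul, one_mul, trace_smul, trace_blochState,
    trace_Lspin_mul_blochState]
  simp only [Complex.ofReal_div, Complex.ofReal_ofNat, smul_eq_mul, mul_one,
    Complex.div_ofNat_re, Complex.ofReal_re]
  ring

theorem purity_blochState (r : Fin 3 → ℝ) : purity (blochState r) = (1 + r ⬝ᵥ r) / 2 := by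
  have h := trace_Lspin_mul_blochState r r
  rw [purity]
  nth_rewrite 1 [blochState]
  rw [add_mul, smul_mul, one_mul, trace_add, trace_smul, trace_blochState, h]
  simp only [one_div, smul_eq_mul, mul_one, Complex.ofReal_div, Complex.ofReal_ofNat,
    Complex.add_re, Complex.inv_re, Complex.re_ofNat, Complex.normSq_ofNat, div_self_mul_self',
    Complex.div_ofNat_re, Complex.ofReal_re]
  ring

theorem sum_smul_blochState {m : ℕ} {p : Fin m → ℝ} (hp₁ : ∑ k, p k = 1)
    (s : Fin m → Fin 3 → ℝ) :
    ∑ k, p k • blochState (s k) = blochState (∑ k, p k • s k) := by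
  have h := map_sum LspinLinearMap (fun k => p k • s k) Finset.univ
  simp only [map_smul] at h
  simp only [blochState, smul_add, Finset.sum_add_distrib, ← Finset.sum_smul, hp₁, one_smul]
  exact congrArg _ h.symm

theorem det_blochState (r : Fin 3 → ℝ) : (blochState r).det = (((1 - r ⬝ᵥ r) / 4 : ℝ) : ℂ) := by
  simp [blochState, Lspin_eq, det_fin_two, dotProduct, Fin.sum_univ_three]
  ring_nf
  simp only [Complex.I_sq]
  ring

def blochVec (ρ : Matrix (Fin 2) (Fin 2) ℂ) : Fin 3 → ℝ :=
  ![2 * (ρ 1 0).re, 2 * (ρ 1 0).im, (ρ 0 0).re - (ρ 1 1).re]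

theorem blochState_blochVec {ρ : Matrix (Fin 2) (Fin 2) ℂ} (hρ : ρ.IsHermitian)
    (htr : ρ.trace = 1) : blochState (blochVec ρ) = ρ := by
  have h00 := congrArg Complex.im (hρ.apply 0 0)
  have h11 := congrArg Complex.im (hρ.apply 1 1)
  have h01 := hρ.apply 0 1
  rw [trace_fin_two] at htr
  have htr_re := congrArg Complex.re htr
  ext i j
  fin_cases i <;> fin_cases j <;> apply Complex.ext <;>
    simp [blochState, blochVec, Lspin_eq, ← h01] at * <;> linarith

theorem dotProduct_self_blochVec_le_one {ρ : Matrix (Fin 2) (Fin 2) ℂ} (hρ : IsDensity ρ) :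
    blochVec ρ ⬝ᵥ blochVec ρ ≤ 1 := by
  have h := hρ.1.det_nonneg
  rw [← blochState_blochVec hρ.1.isHermitian hρ.2, det_blochState, Complex.zero_le_real] at h
  linarith

theorem trace_mul_ketbra (A : Matrix (Fin 2) (Fin 2) ℂ) (ψ : Fin 2 → ℂ) :
    (A * ketbra ψ).trace = star ψ ⬝ᵥ A *ᵥ ψ := by
  rw [ketbra, mul_vecMulVec, trace_vecMulVec, dotProduct_comm]

theorem pureVar_eq_mixVar_ketbra (A : Matrix (Fin 2) (Fin 2) ℂ) (ψ : Fin 2 → ℂ) :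
    pureVar A ψ = mixVar A (ketbra ψ) := by
  rw [pureVar, mixVar, trace_mul_ketbra, trace_mul_ketbra]

theorem trace_ketbra (ψ : Fin 2 → ℂ) : (ketbra ψ).trace = star ψ ⬝ᵥ ψ := by
  rw [ketbra, trace_vecMulVec, dotProduct_comm]

theorem ketbra_mul_self {ψ : Fin 2 → ℂ} (hψ : star ψ ⬝ᵥ ψ = 1) :
    ketbra ψ * ketbra ψ = ketbra ψ := by
  rw [ketbra, vecMulVec_mul_vecMulVec, hψ, one_smul]

theorem blochState_blochVec_ketbra {ψ : Fin 2 → ℂ} (hψ : star ψ ⬝ᵥ ψ = 1) :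
    blochState (blochVec (ketbra ψ)) = ketbra ψ :=
  blochState_blochVec (posSemidef_vecMulVec_self_star ψ).isHermitian (hψ ▸ trace_ketbra ψ)

theorem dotProduct_self_blochVec_ketbra {ψ : Fin 2 → ℂ} (hψ : star ψ ⬝ᵥ ψ = 1) :
    blochVec (ketbra ψ) ⬝ᵥ blochVec (ketbra ψ) = 1 := by
  have h := purity_blochState (blochVec (ketbra ψ))
  rw [blochState_blochVec_ketbra hψ, purity, ketbra_mul_self hψ, trace_ketbra, hψ] at h
  rw [Complex.one_re] at h
  linarith

theorem exists_ketbra_eq_blochState {r : Fin 3 → ℝ} (hr : r ⬝ᵥ r = 1) :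
    ∃ ψ : Fin 2 → ℂ, star ψ ⬝ᵥ ψ = 1 ∧ ketbra ψ = blochState r := by
  suffices h : ∃ ψ, ketbra ψ = blochState r by
    obtain ⟨ψ, hψ⟩ := h
    exact ⟨ψ, by rw [← trace_ketbra, hψ, trace_blochState], hψ⟩
  simp only [dotProduct, Fin.sum_univ_three] at hr
  by_cases hr₂ : r 2 = -1
  · have hr₀ : r 0 = 0 := by nlinarith
    have hr₁ : r 1 = 0 := by nlinarith
    refine ⟨![0, 1], ?_⟩
    ext i j
    fin_cases i <;> fin_cases j <;>
      simp [ketbra, blochState, Lspin_eq, vecMulVec_apply, hr₀, hr₁, hr₂] <;> ring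
  · have hpos : 0 < 2 * (1 + r 2) := by
      have : -1 ≤ r 2 := by nlinarith
      have : -1 < r 2 := lt_of_le_of_ne this (Ne.symm hr₂)
      linarith
    set s : ℂ := ((√(2 * (1 + r 2)) : ℝ) : ℂ)
    have hs : s * s = 2 * (1 + r 2) := by
      simp only [s, ← Complex.ofReal_mul, Real.mul_self_sqrt hpos.le]; push_cast; ring
    have hs₀ : s ≠ 0 := Complex.ofReal_ne_zero.mpr (Real.sqrt_pos.mpr hpos).ne'
    have hs_conj : starRingEnd ℂ s = s := Complex.conj_ofReal _
    have h1 : (1 + r 2 : ℂ) ≠ 0 := by exact_mod_cast (show 1 + r 2 ≠ 0 by linarith)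
    have hrC : (r 0 : ℂ) * r 0 + r 1 * r 1 + r 2 * r 2 = 1 := by exact_mod_cast hr
    refine ⟨![(1 + r 2) / s, (r 0 + r 1 * Complex.I) / s], ?_⟩
    ext i j
    fin_cases i <;> fin_cases j <;>
      simp [ketbra, blochState, Lspin_eq, vecMulVec_apply, hs_conj] <;>
      rw [div_mul_div_comm, hs] <;> field_simp
    · ring
    · linear_combination hrC - (r 1 : ℂ) ^ 2 * Complex.I_sq

/-- Bounds 1/4 ≤ (1/4)F_Q[ρ,L_{n₁}] + (ΔL_{n₂})²_ρ ≤ Tr(ρ²)/2 for qubits, expressed via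
pure-state decompositions: every decomposition gives a sum ≥ 1/4, and some decomposition
gives a sum ≤ Tr(ρ²)/2. -/
theorem stmt_11 (n₁ n₂ : Fin 3 → ℝ)
    (h11 : n₁ ⬝ᵥ n₁ = 1) (h22 : n₂ ⬝ᵥ n₂ = 1) (h12 : n₁ ⬝ᵥ n₂ = 0)
    (ρ : Matrix (Fin 2) (Fin 2) ℂ) (hρ : IsDensity ρ) :
    (∀ (m : ℕ) (p : Fin m → ℝ) (ψ : Fin m → (Fin 2 → ℂ)),
      (∀ k, 0 ≤ p k) → (∑ k, p k) = 1 →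
      (∀ k, star (ψ k) ⬝ᵥ ψ k = 1) →
      ρ = (∑ k, p k • ketbra (ψ k)) →
      1 / 4 ≤ (∑ k, p k * pureVar (Lspin n₁) (ψ k)) + mixVar (Lspin n₂) ρ) ∧
    (∃ (m : ℕ) (p : Fin m → ℝ) (ψ : Fin m → (Fin 2 → ℂ)),
      (∀ k, 0 ≤ p k) ∧ (∑ k, p k) = 1 ∧
      (∀ k, star (ψ k) ⬝ᵥ ψ k = 1) ∧
      ρ = (∑ k, p k • ketbra (ψ k)) ∧
      (∑ k, p k * pureVar (Lspin n₁) (ψ k)) + mixVar (Lspin n₂) ρ ≤ purity ρ / 2) := by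
  constructor
  · intro m p ψ hp hp₁ hψ hdec
    set s := fun k => blochVec (ketbra (ψ k))
    have hks : ∀ k, ketbra (ψ k) = blochState (s k) :=
      fun k => (blochState_blochVec_ketbra (hψ k)).symm
    have hρs : ρ = blochState (∑ k, p k • s k) := by
      rw [hdec, ← sum_smul_blochState hp₁]; simp_rw [hks]
    have key := sum_mul_sq_dotProduct_add_sq_dotProduct_sum_le h11 h22 h12 hp hp₁
      fun k => dotProduct_self_blochVec_ketbra (hψ k)
    simp only [pureVar_eq_mixVar_ketbra, hks, hρs, mixVar_Lspin_blochState, h11, h22,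
      mul_div_assoc', mul_sub, mul_one, ← Finset.sum_div, Finset.sum_sub_distrib, hp₁]
    linarith
  · obtain ⟨p, s, hp, hp₁, hs, hsum, hdot⟩ :=
      exists_unit_decomposition_along h11 (dotProduct_self_blochVec_le_one hρ)
    choose ψ hψ hks using fun k => exists_ketbra_eq_blochState (hs k)
    have hρr : blochState (blochVec ρ) = ρ := blochState_blochVec hρ.1.isHermitian hρ.2
    refine ⟨2, p, ψ, hp, hp₁, hψ, ?_, ?_⟩
    · simp_rw [hks]; rw [sum_smul_blochState hp₁, hsum, hρr]
    · rw [← hρr]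
      simp only [pureVar_eq_mixVar_ketbra, hks, mixVar_Lspin_blochState, h11, h22, hdot,
        purity_blochState, ← Finset.sum_mul, hp₁]
      nlinarith [sq_nonneg (n₁ ⬝ᵥ blochVec ρ), sq_nonneg (n₂ ⬝ᵥ blochVec ρ)]
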